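/- arXiv:0811.2191 — 2 statements merged into one kernel-verified Lean document; each statement's English description precedes it below -/
import Mathlib

section
/- Let E be the cone of positive finite regular real Borel measures μ on the unit circle satisfying ∫ Re(z) dμ(z) = 0 and ∫ Im(z) dμ(z) = 0. If μ is an extreme direction of E, then the support of μ consists of at most three points. -/
open Complex MeasureTheory
open scoped NNReal

/-- The unit circle in `ℂ`. -/
noncomputable abbrev UnitCircle := Metric.sphere (0 : ℂ) 1

/-- The cone of positive finite Borel measures on the unit circle with
`∫ Re z dμ = 0` and `∫ Im z dμ = 0`. -/
def ZeroMomentCone : Set (Measure UnitCircle) :=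
  {μ | IsFiniteMeasure μ ∧ (∫ w : UnitCircle, (w : ℂ).re ∂μ) = 0 ∧
    (∫ w : UnitCircle, (w : ℂ).im ∂μ) = 0}

/-!
If the support of `μ` has four points, cut the circle into four measurable pieces `A i` of
positive measure and let `v i = ∫_{A i} z dμ`. Four vectors in the real plane `ℂ` with
`∑ v i = 0` admit a non-constant weight `c : Fin 4 → [0, 1]` with `∑ c i v i = 0`. Then
`∑ c i μ|A i` and `∑ (1 - c i) μ|A i` lie in the cone and add up to `μ`, but the first one
is not a multiple of `μ`.
-/

open Module Set Function
open scoped ENNReal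

/-- A nonzero kernel vector of `g ↦ (∑ i, g i • v i, g i₀)` vanishes at `i₀` but not everywhere. -/
theorem exists_nonconst_sum_smul_eq_zero {ι V : Type*} [Fintype ι]
    [AddCommGroup V] [Module ℝ V] [FiniteDimensional ℝ V] (v : ι → V)
    (hcard : finrank ℝ V + 2 ≤ Fintype.card ι) :
    ∃ g : ι → ℝ, ∑ i, g i • v i = 0 ∧ ∃ i j, g i ≠ g j := by
  obtain ⟨i₀⟩ : Nonempty ι := Fintype.card_pos_iff.1 (by omega)
  let L := (Fintype.linearCombination ℝ v).prod
    (LinearMap.proj (R := ℝ) (φ := fun _ : ι => ℝ) i₀)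
  have hL : LinearMap.ker L ≠ ⊥ := LinearMap.ker_ne_bot_of_finrank_lt (by
    rw [Module.finrank_prod, Module.finrank_fintype_fun_eq_card, Module.finrank_self]; omega)
  obtain ⟨g, hg, hg0⟩ := Submodule.exists_mem_ne_zero_of_ne_bot hL
  obtain ⟨j, hj⟩ := Function.ne_iff.1 hg0
  simp only [L, LinearMap.ker_prod, Submodule.mem_inf, LinearMap.mem_ker, LinearMap.coe_proj, eval,
    Fintype.linearCombination_apply] at hg
  exact ⟨g, hg.1, j, i₀, by simpa [hg.2] using hj⟩

theorem exists_nonconst_unitInterval_sum_smul_eq_zero {ι V : Type*} [Fintype ι]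
    [AddCommGroup V] [Module ℝ V] [FiniteDimensional ℝ V] (v : ι → V)
    (hcard : finrank ℝ V + 2 ≤ Fintype.card ι) (hsum : ∑ i, v i = 0) :
    ∃ c : ι → ℝ≥0, (∀ i, c i ≤ 1) ∧ ∑ i, (c i : ℝ) • v i = 0 ∧ ∃ i j, c i ≠ c j := by
  obtain ⟨g, hg, i, j, hij⟩ := exists_nonconst_sum_smul_eq_zero v hcard
  have hg_pos : 0 < ‖g‖ := norm_pos_iff.2 fun h => hij (by simp [h])
  set ε : ℝ := (2 * ‖g‖)⁻¹
  have hε : 0 < ε := by positivity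
  have hbound : ∀ k, |ε * g k| ≤ 1 / 2 := fun k => by
    rw [abs_mul, abs_of_pos hε, ← Real.norm_eq_abs]
    calc ε * ‖g k‖ ≤ ε * ‖g‖ := by gcongr; exact norm_le_pi_norm g k
      _ = 1 / 2 := by simp only [ε]; field_simp
  let c : ι → ℝ≥0 := fun k => ⟨1 / 2 + ε * g k, by linarith [(abs_le.1 (hbound k)).1]⟩
  have hc : ∀ k, (c k : ℝ) = 1 / 2 + ε * g k := fun _ => rfl
  refine ⟨c, fun k => ?_, ?_, i, j, fun h => hij ?_⟩
  · rw [← NNReal.coe_le_coe, hc, NNReal.coe_one]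
    linarith [(abs_le.1 (hbound k)).2]
  · simp only [hc, add_smul, mul_smul, Finset.sum_add_distrib, ← Finset.smul_sum, hsum, hg,
      smul_zero, add_zero]
  · have := congrArg ((↑) : ℝ≥0 → ℝ) h
    rw [hc, hc, add_right_inj] at this
    exact mul_left_cancel₀ hε.ne' this

namespace MeasureTheory.Measure

section Partition

variable {X ι : Type*} [MeasurableSpace X] [Fintype ι] {μ : Measure X} {A : ι → Set X}

theorem sum_restrict_of_partition (hm : ∀ i, MeasurableSet (A i))
    (hd : Pairwise (Disjoint on A)) (hcover : ⋃ i, A i = univ) :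
    ∑ i, μ.restrict (A i) = μ := by
  rw [← sum_fintype, ← restrict_iUnion hd hm, hcover, restrict_univ]

theorem sum_smul_restrict_add_sum_one_sub_smul_restrict (hm : ∀ i, MeasurableSet (A i))
    (hd : Pairwise (Disjoint on A)) (hcover : ⋃ i, A i = univ) {c : ι → ℝ≥0}
    (hc : ∀ i, c i ≤ 1) :
    ∑ i, c i • μ.restrict (A i) + ∑ i, (1 - c i) • μ.restrict (A i) = μ := by
  simp only [← Finset.sum_add_distrib, ← add_smul, add_tsub_cancel_of_le (hc _), one_smul,
    sum_restrict_of_partition hm hd hcover]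

theorem sum_smul_restrict_apply_of_pairwise_disjoint (hm : ∀ i, MeasurableSet (A i))
    (hd : Pairwise (Disjoint on A)) (c : ι → ℝ≥0) (j : ι) :
    (∑ i, c i • μ.restrict (A i)) (A j) = c j • μ (A j) := by
  rw [coe_finsetSum, Finset.sum_apply, Finset.sum_eq_single j]
  · rw [smul_apply, restrict_apply (hm j), inter_self]
  · intro i _ hij
    rw [smul_apply, restrict_apply (hm j), (hd hij).symm.inter_eq, measure_empty, smul_zero]
  · simp

theorem coeff_eq_of_sum_smul_restrict_eq_smul (hm : ∀ i, MeasurableSet (A i))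
    (hd : Pairwise (Disjoint on A)) {c : ι → ℝ≥0} {t : ℝ≥0}
    (h : ∑ i, c i • μ.restrict (A i) = t • μ) {j : ι} (hj : μ (A j) ≠ 0) (hj_top : μ (A j) ≠ ∞) :
    c j = t := by
  have := congrArg (· (A j)) h
  rw [sum_smul_restrict_apply_of_pairwise_disjoint hm hd, smul_apply] at this
  simp only [ENNReal.smul_def, smul_eq_mul] at this
  exact_mod_cast (ENNReal.mul_left_inj hj hj_top).1 this

theorem integral_sum_smul_restrict {E : Type*} [NormedAddCommGroup E] [NormedSpace ℝ E]
    {f : X → E} (hf : Integrable f μ) (c : ι → ℝ≥0) :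
    ∫ x, f x ∂(∑ i, c i • μ.restrict (A i)) = ∑ i, (c i : ℝ) • ∫ x in A i, f x ∂μ := by
  rw [integral_finsetSum_measure fun i _ => hf.restrict.smul_measure_nnreal]
  simp only [integral_smul_nnreal_measure, NNReal.smul_def]

end Partition

section Support

variable {X : Type*} [TopologicalSpace X] [MeasurableSpace X] {μ : Measure X}

theorem exists_finset_subset_support_card_eq [HereditarilyLindelofSpace X] {n : ℕ}
    (h : ∀ S : Finset X, S.card ≤ n → μ Sᶜ ≠ 0) :
    ∃ S : Finset X, ↑S ⊆ μ.support ∧ S.card = n + 1 := by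
  by_cases hfin : μ.support.Finite
  · obtain ⟨S, hS, hcard⟩ := Finset.exists_subset_card_eq (s := hfin.toFinset) (n := n + 1) <| by
      by_contra! hlt
      exact h hfin.toFinset (by omega) (by simp)
    exact ⟨S, hfin.subset_toFinset.1 hS, hcard⟩
  · exact Set.Infinite.exists_subset_card_eq hfin (n + 1)

theorem exists_pairwise_disjoint_isOpen_measure_ne_zero [HereditarilyLindelofSpace X]
    [T2Space X] {n : ℕ} (h : ∀ S : Finset X, S.card ≤ n → μ Sᶜ ≠ 0) :
    ∃ U : Fin (n + 1) → Set X, (∀ i, IsOpen (U i)) ∧ Pairwise (Disjoint on U) ∧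
      ∀ i, μ (U i) ≠ 0 := by
  obtain ⟨S, hS, hcard⟩ := exists_finset_subset_support_card_eq h
  obtain ⟨V, hV, hVd⟩ := S.finite_toSet.t2_separation
  let x : Fin (n + 1) → X := fun i => (S.equivFinOfCardEq hcard).symm i
  have hx : Function.Injective x := Subtype.val_injective.comp (Equiv.injective _)
  refine ⟨V ∘ x, fun i => (hV _).2, fun i j hij => hVd (Subtype.prop _) (Subtype.prop _)
    (hx.ne hij), fun i => ?_⟩
  exact ((mem_support_iff_forall _).1 (hS (Subtype.prop _)) _ ((hV _).2.mem_nhds (hV _).1)).ne'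

end Support

end MeasureTheory.Measure

theorem exists_measurable_partition_superset {X : Type*} [MeasurableSpace X] {n : ℕ}
    {U : Fin (n + 1) → Set X} (hm : ∀ i, MeasurableSet (U i)) (hd : Pairwise (Disjoint on U)) :
    ∃ A : Fin (n + 1) → Set X, (∀ i, MeasurableSet (A i)) ∧ Pairwise (Disjoint on A) ∧
      ⋃ i, A i = univ ∧ ∀ i, U i ⊆ A i := by
  set R : Set X := (⋃ i : Fin n, U i.succ)ᶜ
  refine ⟨Fin.cons (α := fun _ => Set X) R fun i => U i.succ, ?_, ?_, ?_, ?_⟩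
  · refine Fin.cases ?_ fun i => ?_
    · exact (MeasurableSet.iUnion fun i : Fin n => hm i.succ).compl
    · exact hm i.succ
  · intro i j hij
    cases i using Fin.cases <;> cases j using Fin.cases
    · exact absurd rfl hij
    · exact disjoint_compl_left_iff_subset.2 (subset_iUnion (fun k : Fin n => U k.succ) _)
    · exact disjoint_compl_right_iff_subset.2 (subset_iUnion (fun k : Fin n => U k.succ) _)
    · exact hd hij
  · refine eq_univ_of_forall fun x => ?_
    by_cases hx : x ∈ ⋃ i : Fin n, U i.succ
    · obtain ⟨i, hi⟩ := mem_iUnion.1 hx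
      exact mem_iUnion.2 ⟨i.succ, hi⟩
    · exact mem_iUnion.2 ⟨0, hx⟩
  · refine Fin.cases ?_ fun i => subset_rfl
    exact subset_compl_comm.1 (iUnion_subset fun i => (hd (Fin.succ_ne_zero i)).subset_compl_right)

theorem integrable_coe_unitCircle (μ : Measure UnitCircle) [IsFiniteMeasure μ] :
    Integrable (fun w : UnitCircle => (w : ℂ)) μ :=
  .of_bound continuous_subtype_val.aestronglyMeasurable 1 (.of_forall fun w => by simp)

theorem integral_coe_unitCircle_re (μ : Measure UnitCircle) [IsFiniteMeasure μ] :
    ∫ w, (w : ℂ).re ∂μ = (∫ w, (w : ℂ) ∂μ).re := by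
  simpa using integral_re (integrable_coe_unitCircle μ)

theorem integral_coe_unitCircle_im (μ : Measure UnitCircle) [IsFiniteMeasure μ] :
    ∫ w, (w : ℂ).im ∂μ = (∫ w, (w : ℂ) ∂μ).im := by
  simpa using integral_im (integrable_coe_unitCircle μ)

theorem mem_zeroMomentCone_iff {μ : Measure UnitCircle} :
    μ ∈ ZeroMomentCone ↔ IsFiniteMeasure μ ∧ ∫ w, (w : ℂ) ∂μ = 0 := by
  refine ⟨fun ⟨_, hre, him⟩ => ⟨‹_›, ?_⟩, fun ⟨_, h⟩ => ⟨‹_›, ?_⟩⟩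
  · rw [integral_coe_unitCircle_re] at hre
    rw [integral_coe_unitCircle_im] at him
    exact Complex.ext hre him
  · rw [integral_coe_unitCircle_re, integral_coe_unitCircle_im, h]
    exact ⟨zero_re, zero_im⟩

theorem sum_smul_restrict_mem_zeroMomentCone {ι : Type*} [Fintype ι] {μ : Measure UnitCircle}
    [IsFiniteMeasure μ] {A : ι → Set UnitCircle} {c : ι → ℝ≥0}
    (h : ∑ i, (c i : ℝ) • ∫ w in A i, (w : ℂ) ∂μ = 0) :
    ∑ i, c i • μ.restrict (A i) ∈ ZeroMomentCone :=
  mem_zeroMomentCone_iff.2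
    ⟨inferInstance, by rwa [Measure.integral_sum_smul_restrict (integrable_coe_unitCircle μ)]⟩

/-- If `μ` is an extreme direction of the cone `E` of positive finite measures on the
circle with vanishing first (real) moments, then `μ` is supported on at most three
points. -/
theorem extreme_direction_supported_on_three_points
    (μ : Measure UnitCircle) (hμ : μ ∈ ZeroMomentCone)
    (hext : ∀ μ₁ ∈ ZeroMomentCone, ∀ μ₂ ∈ ZeroMomentCone, μ = μ₁ + μ₂ →
      ∃ t s : ℝ≥0, μ₁ = t • μ ∧ μ₂ = s • μ) :
    ∃ S : Finset UnitCircle, S.card ≤ 3 ∧ μ (↑S)ᶜ = 0 := by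
  obtain ⟨hfin, hmoment⟩ := mem_zeroMomentCone_iff.1 hμ
  by_contra! hsupp
  obtain ⟨U, hUo, hUd, hUμ⟩ := Measure.exists_pairwise_disjoint_isOpen_measure_ne_zero hsupp
  obtain ⟨A, hAm, hAd, hAcover, hUA⟩ :=
    exists_measurable_partition_superset (fun i => (hUo i).measurableSet) hUd
  set v : Fin 4 → ℂ := fun i => ∫ w in A i, (w : ℂ) ∂μ
  have hv : ∑ i, v i = 0 := by
    rw [← integral_iUnion_fintype hAm hAd fun i => (integrable_coe_unitCircle μ).integrableOn,
      hAcover, Measure.restrict_univ, hmoment]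
  obtain ⟨c, hc1, hcv, i, j, hij⟩ :=
    exists_nonconst_unitInterval_sum_smul_eq_zero v (by simp [Complex.finrank_real_complex]) hv
  have hc1v : ∑ i, ((1 - c i : ℝ≥0) : ℝ) • v i = 0 := by
    simp only [NNReal.coe_sub (hc1 _), NNReal.coe_one, sub_smul, one_smul,
      Finset.sum_sub_distrib, hv, hcv, sub_zero]
  obtain ⟨t, -, ht, -⟩ := hext _ (sum_smul_restrict_mem_zeroMomentCone hcv) _
    (sum_smul_restrict_mem_zeroMomentCone hc1v)
    (Measure.sum_smul_restrict_add_sum_one_sub_smul_restrict hAm hAd hAcover hc1).symm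
  have hc : ∀ k, c k = t := fun k => Measure.coeff_eq_of_sum_smul_restrict_eq_smul hAm hAd ht
    ((measure_mono_null (hUA k)).mt (hUμ k)) (measure_ne_top μ _)
  exact hij ((hc i).trans (hc j).symm)
end

section
/- Let μ be a zero-mean Borel probability measure on the unit circle supported on n ∈ {2,3} points, let h_μ(z) = ∫_𝕋 (w+z)/(w-z) dμ(w) and ψ_μ = (h_μ - 1)/(h_μ + 1). Then ψ_μ is a rational inner function (a Blaschke product) of degree n with ψ_μ(0) = 0 and ψ_μ'(0) = 0, and for w on the unit circle, ψ_μ(w) = 1 exactly when w lies in the support of μ. -/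
/-!
For `μ = ∑ p_w δ_w` the Herglotz transform is the rational function
`h(z) = ∑ p_w (w + z) / (w - z)`, so `ψ = (h - 1) / (h + 1)` can be computed in closed form,
using `∑ p_w = 1` and `∑ p_w w = 0`. For two points these force equal masses at antipodal points
`±u`, and `ψ(z) = z² / u²`. For three points `a, b, c` one finds
`ψ(z) = z² · conj(abc) · (z - s) / (1 - conj(s) z)` with `s = a + b + c`. The mean condition gives
`p q |a - b|² = 1 - 2r` (and cyclically), whence `p q r (1 - |s|²) = (1 - 2p)(1 - 2q)(1 - 2r) > 0`,
so `|s| < 1`. Finally the identity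
`z² · conj(abc) · (z - s) - (1 - conj(s) z) = conj(abc) (z - a)(z - b)(z - c)`
locates the points of the circle where `ψ = 1`.
-/

open Complex MeasureTheory
open scoped ComplexConjugate

theorem MeasureTheory.integral_eq_sum_of_measure_compl_eq_zero {X E : Type*} [MeasurableSpace X]
    [MeasurableSingletonClass X] [NormedAddCommGroup E] [NormedSpace ℝ E] [CompleteSpace E]
    {μ : Measure X} [IsFiniteMeasure μ] {S : Finset X} (hS : μ (↑S)ᶜ = 0) (f : X → E) :
    ∫ x, f x ∂μ = ∑ x ∈ S, μ.real {x} • f x := by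
  rw [← setIntegral_finset S IntegrableOn.finset, Measure.restrict_eq_self_of_ae_mem]
  exact measure_eq_zero_iff_ae_notMem.mp hS |>.mono fun x hx => by simpa using hx

theorem MeasureTheory.sum_measureReal_singleton_eq_one {X : Type*} [MeasurableSpace X]
    [MeasurableSingletonClass X] {μ : Measure X} [IsProbabilityMeasure μ] {S : Finset X}
    (hS : μ (↑S)ᶜ = 0) : ∑ x ∈ S, μ.real {x} = 1 := by
  rw [sum_measureReal_singleton, measureReal_def,
    (prob_compl_eq_zero_iff S.measurableSet).mp hS, ENNReal.toReal_one]

theorem MeasureTheory.measureReal_pos_of_measure_ne_zero {X : Type*} [MeasurableSpace X]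
    {μ : Measure X} [IsFiniteMeasure μ] {s : Set X} (hs : μ s ≠ 0) : 0 < μ.real s :=
  ENNReal.toReal_pos hs (measure_ne_top μ s)

section WeightedUnitVectors

variable {E : Type*} [NormedAddCommGroup E]

theorem eq_neg_of_smul_add_smul_eq_zero [NormedSpace ℝ E] {u v : E} (hu : ‖u‖ = 1)
    (hv : ‖v‖ = 1) {p q : ℝ} (hp : 0 ≤ p) (hq : 0 ≤ q) (hsum : p + q = 1)
    (hmean : p • u + q • v = 0) : p = 1 / 2 ∧ q = 1 / 2 ∧ v = -u := by
  have hpq : p = q := by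
    have := congrArg norm (eq_neg_of_add_eq_zero_left hmean)
    rwa [norm_neg, norm_smul, norm_smul, hu, hv, Real.norm_of_nonneg hp,
      Real.norm_of_nonneg hq, mul_one, mul_one] at this
  have hp2 : p = 1 / 2 := by linarith
  refine ⟨hp2, by linarith, ?_⟩
  rw [← hpq, hp2, ← smul_add] at hmean
  exact eq_neg_of_add_eq_zero_right (smul_eq_zero.mp hmean |>.resolve_left (by norm_num))

variable [InnerProductSpace ℝ E]

theorem norm_smul_add_smul_sq_add_mul_norm_sub_sq {a b : E} (ha : ‖a‖ = 1) (hb : ‖b‖ = 1)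
    (p q : ℝ) : ‖p • a + q • b‖ ^ 2 + p * q * ‖a - b‖ ^ 2 = (p + q) ^ 2 := by
  rw [norm_add_sq_real, norm_sub_sq_real, norm_smul, norm_smul, real_inner_smul_left,
    real_inner_smul_right, ha, hb, Real.norm_eq_abs, Real.norm_eq_abs, mul_pow, mul_pow,
    sq_abs, sq_abs]
  ring

theorem norm_add_add_sq_add_norm_sub_sq (a b c : E) :
    ‖a + b + c‖ ^ 2 + ‖a - b‖ ^ 2 + ‖a - c‖ ^ 2 + ‖b - c‖ ^ 2
      = 3 * (‖a‖ ^ 2 + ‖b‖ ^ 2 + ‖c‖ ^ 2) := by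
  rw [norm_add_sq_real, norm_add_sq_real, norm_sub_sq_real, norm_sub_sq_real, norm_sub_sq_real,
    inner_add_left]
  ring

theorem mul_mul_norm_sub_sq_eq_one_sub_two_mul {a b c : E} (ha : ‖a‖ = 1) (hb : ‖b‖ = 1)
    (hc : ‖c‖ = 1) {p q r : ℝ} (hr : 0 ≤ r) (hsum : p + q + r = 1)
    (hmean : p • a + q • b + r • c = 0) : p * q * ‖a - b‖ ^ 2 = 1 - 2 * r := by
  have hnorm : ‖p • a + q • b‖ = r := by
    rw [eq_neg_of_add_eq_zero_left hmean, norm_neg, norm_smul, hc, mul_one,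
      Real.norm_of_nonneg hr]
  have := norm_smul_add_smul_sq_add_mul_norm_sub_sq ha hb p q
  rw [hnorm] at this
  linear_combination this + (1 + p + q - r) * hsum

theorem norm_add_add_lt_one {a b c : E} (ha : ‖a‖ = 1) (hb : ‖b‖ = 1) (hc : ‖c‖ = 1)
    (hab : a ≠ b) (hac : a ≠ c) (hbc : b ≠ c) {p q r : ℝ} (hp : 0 < p) (hq : 0 < q) (hr : 0 < r)
    (hsum : p + q + r = 1) (hmean : p • a + q • b + r • c = 0) : ‖a + b + c‖ < 1 := by
  have hab' := mul_mul_norm_sub_sq_eq_one_sub_two_mul ha hb hc hr.le hsum hmean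
  have hac' := mul_mul_norm_sub_sq_eq_one_sub_two_mul (p := p) (q := r) ha hc hb hq.le
    (by linarith) (by rw [← hmean]; abel)
  have hbc' := mul_mul_norm_sub_sq_eq_one_sub_two_mul (p := q) (q := r) hb hc ha hp.le
    (by linarith) (by rw [← hmean]; abel)
  have hsq := norm_add_add_sq_add_norm_sub_sq a b c
  rw [ha, hb, hc] at hsq
  have key : p * q * r * (1 - ‖a + b + c‖ ^ 2) = (1 - 2 * p) * (1 - 2 * q) * (1 - 2 * r) := by
    linear_combination (-(p * q * r)) * hsq + r * hab' + q * hac' + p * hbc'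
      + (1 - 2 * (p + q + r)) * hsum
  have hpos : 0 < (1 - 2 * p) * (1 - 2 * q) * (1 - 2 * r) := by
    have := norm_sub_pos_iff.mpr hab
    have := norm_sub_pos_iff.mpr hac
    have := norm_sub_pos_iff.mpr hbc
    rw [← hab', ← hac', ← hbc']
    positivity
  rw [← key] at hpos
  have := pos_of_mul_pos_right hpos (by positivity)
  exact (sq_lt_one_iff₀ (norm_nonneg _)).mp (by linarith)

end WeightedUnitVectors

section CayleyHerglotz

theorem cayley_herglotz_two_point {u z H : ℂ} (hu : ‖u‖ = 1) (hzu : z ≠ u) (hzu' : z ≠ -u)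
    (hH : H = (1 / 2 : ℝ) • ((u + z) / (u - z)) + (1 / 2 : ℝ) • ((-u + z) / (-u - z))) :
    (H - 1) / (H + 1) = z ^ 2 * conj u ^ 2 := by
  have hu0 : u ≠ 0 := by rintro rfl; simp at hu
  have h₁ : u - z ≠ 0 := sub_ne_zero.mpr hzu.symm
  have h₂ : u + z ≠ 0 := fun h => hzu' (by linear_combination h)
  have h₃ : -u - z ≠ 0 := fun h => hzu' (by linear_combination -h)
  have hplus : H + 1 = 2 * u ^ 2 / ((u - z) * (u + z)) := by
    rw [hH]; simp only [Complex.real_smul]; push_cast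
    field_simp
    ring
  have hminus : H - 1 = 2 * z ^ 2 / ((u - z) * (u + z)) := by
    rw [show H - 1 = H + 1 - 2 by ring, hplus]
    field_simp
    ring
  rw [hplus, hminus, ← inv_eq_conj hu]
  field_simp

theorem sq_mul_conj_sq_eq_one_iff {u w : ℂ} (hu : ‖u‖ = 1) :
    w ^ 2 * conj u ^ 2 = 1 ↔ w = u ∨ w = -u := by
  have hu0 : u ≠ 0 := by rintro rfl; simp at hu
  rw [← inv_eq_conj hu, inv_pow, mul_inv_eq_one₀ (pow_ne_zero 2 hu0), sq_eq_sq_iff_eq_or_eq_neg]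

theorem cayley_herglotz_three_point {a b c z H : ℂ} (ha : ‖a‖ = 1) (hb : ‖b‖ = 1)
    (hc : ‖c‖ = 1) {p q r : ℝ} (hsum : p + q + r = 1) (hmean : p • a + q • b + r • c = 0)
    (hza : z ≠ a) (hzb : z ≠ b) (hzc : z ≠ c) (hz : 1 - conj (a + b + c) * z ≠ 0)
    (hH : H = p • ((a + z) / (a - z)) + q • ((b + z) / (b - z)) + r • ((c + z) / (c - z))) :
    (H - 1) / (H + 1)
      = z ^ 2 * (conj (a * b * c) * ((z - (a + b + c)) / (1 - conj (a + b + c) * z))) := by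
  have ha0 : a ≠ 0 := by rintro rfl; simp at ha
  have hb0 : b ≠ 0 := by rintro rfl; simp at hb
  have hc0 : c ≠ 0 := by rintro rfl; simp at hc
  have h₁ : a - z ≠ 0 := sub_ne_zero.mpr hza.symm
  have h₂ : b - z ≠ 0 := sub_ne_zero.mpr hzb.symm
  have h₃ : c - z ≠ 0 := sub_ne_zero.mpr hzc.symm
  simp only [Complex.real_smul] at hmean hH
  have hsum' : (p : ℂ) + q + r = 1 := by exact_mod_cast hsum
  -- the conjugate of the mean condition, `p / a + q / b + r / c = 0`, cleared of denominators
  have hmean' : p * (b * c) + q * (a * c) + r * (a * b) = 0 := by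
    have := congrArg conj hmean
    simp only [map_add, map_mul, conj_ofReal, ← inv_eq_conj ha, ← inv_eq_conj hb,
      ← inv_eq_conj hc, map_zero] at this
    field_simp at this
    linear_combination this
  have hplus : H + 1
      = 2 * (a * b * c - (a * b + a * c + b * c) * z) / ((a - z) * (b - z) * (c - z)) := by
    rw [hH]
    field_simp
    linear_combination
      (2 * a * b * c - 2 * (a * b + a * c + b * c) * z - (a - z) * (b - z) * (c - z)) * hsum'
      + 2 * z * hmean' + 2 * z ^ 2 * hmean
  have hminus : H - 1 = 2 * z ^ 2 * (z - (a + b + c)) / ((a - z) * (b - z) * (c - z)) := by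
    rw [show H - 1 = H + 1 - 2 by ring, hplus]
    field_simp
    ring
  rw [map_add, map_add, ← inv_eq_conj ha, ← inv_eq_conj hb, ← inv_eq_conj hc] at hz ⊢
  rw [map_mul, map_mul, ← inv_eq_conj ha, ← inv_eq_conj hb, ← inv_eq_conj hc, hplus, hminus]
  field_simp
  ring

theorem sq_mul_blaschke_three_point_eq_one_iff {a b c w : ℂ} (ha : ‖a‖ = 1) (hb : ‖b‖ = 1)
    (hc : ‖c‖ = 1) (hw : 1 - conj (a + b + c) * w ≠ 0) :
    w ^ 2 * (conj (a * b * c) * ((w - (a + b + c)) / (1 - conj (a + b + c) * w))) = 1 ↔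
      w = a ∨ w = b ∨ w = c := by
  have ha0 : a ≠ 0 := by rintro rfl; simp at ha
  have hb0 : b ≠ 0 := by rintro rfl; simp at hb
  have hc0 : c ≠ 0 := by rintro rfl; simp at hc
  rw [map_add, map_add, ← inv_eq_conj ha, ← inv_eq_conj hb, ← inv_eq_conj hc] at hw ⊢
  rw [map_mul, map_mul, ← inv_eq_conj ha, ← inv_eq_conj hb, ← inv_eq_conj hc, mul_div_assoc',
    mul_div_assoc', div_eq_one_iff_eq hw, ← sub_eq_zero]
  have key : w ^ 2 * (a⁻¹ * b⁻¹ * c⁻¹ * (w - (a + b + c))) - (1 - (a⁻¹ + b⁻¹ + c⁻¹) * w)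
      = (a * b * c)⁻¹ * ((w - a) * (w - b) * (w - c)) := by
    field_simp
    ring
  simp [key, ha0, hb0, hc0, sub_eq_zero, or_assoc]

end CayleyHerglotz

theorem one_sub_conj_mul_ne_zero {s z : ℂ} (hs : ‖s‖ < 1) (hz : ‖z‖ ≤ 1) : 1 - conj s * z ≠ 0 := by
  refine sub_ne_zero.mpr (ne_of_apply_ne norm ?_)
  rw [norm_one, norm_mul, norm_conj]
  exact (mul_lt_one_of_nonneg_of_lt_one_left (norm_nonneg s) hs hz).ne'

noncomputable def blaschkeProduct {n : ℕ} (c : ℂ) (a : Fin n → ℂ) (z : ℂ) : ℂ :=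
  c * ∏ i, (z - a i) / (1 - conj (a i) * z)

theorem blaschkeProduct_cons_zero_cons_zero {m : ℕ} (c : ℂ) (a : Fin m → ℂ) (z : ℂ) :
    blaschkeProduct c (Fin.cons 0 (Fin.cons 0 a)) z = z ^ 2 * blaschkeProduct c a z := by
  simp only [blaschkeProduct, Fin.prod_univ_succ, Fin.cons_zero, Fin.cons_succ, map_zero,
    zero_mul, sub_zero, div_one]
  ring

theorem differentiableAt_blaschkeProduct {n : ℕ} (c : ℂ) (a : Fin n → ℂ) {z : ℂ}
    (h : ∀ i, 1 - conj (a i) * z ≠ 0) : DifferentiableAt ℂ (blaschkeProduct c a) z := by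
  unfold blaschkeProduct
  fun_prop (disch := exact h _)

theorem exists_blaschkeProduct_of_eq_sq_mul {m : ℕ} {ψ : ℂ → ℂ} {S : Finset UnitCircle} {c : ℂ}
    {a : Fin m → ℂ} (hc : ‖c‖ = 1) (ha : ∀ i, ‖a i‖ < 1)
    (hψ : ∀ z : ℂ, ‖z‖ < 1 → ψ z = z ^ 2 * blaschkeProduct c a z)
    (hS : ∀ w : UnitCircle, (w : ℂ) ^ 2 * blaschkeProduct c a w = 1 ↔ w ∈ S) :
    ∃ (c : ℂ) (a : Fin (m + 2) → ℂ), ‖c‖ = 1 ∧ (∀ i, ‖a i‖ < 1) ∧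
      (∀ z : ℂ, ‖z‖ < 1 → ψ z = blaschkeProduct c a z) ∧ ψ 0 = 0 ∧ deriv ψ 0 = 0 ∧
      ∀ w : UnitCircle, blaschkeProduct c a w = 1 ↔ w ∈ S := by
  have hB := blaschkeProduct_cons_zero_cons_zero c a
  refine ⟨c, Fin.cons 0 (Fin.cons 0 a), hc, by simp [Fin.forall_fin_succ, ha],
    fun z hz => by rw [hψ z hz, hB], by simpa using hψ 0 (by simp), ?_, fun w => by rw [hB, hS]⟩
  have hψ_nhds : ψ =ᶠ[nhds 0] fun z => z ^ 2 * blaschkeProduct c a z :=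
    Filter.eventually_of_mem (Metric.ball_mem_nhds 0 one_pos) fun z hz => hψ z (by simpa using hz)
  rw [hψ_nhds.deriv_eq]
  simpa using ((hasDerivAt_pow 2 0).fun_mul
    (differentiableAt_blaschkeProduct c a (by simp)).hasDerivAt).deriv

noncomputable def herglotzTransform (μ : Measure UnitCircle) (z : ℂ) : ℂ :=
  ∫ w : UnitCircle, ((w : ℂ) + z) / ((w : ℂ) - z) ∂μ

section FinitelySupported

variable {μ : Measure UnitCircle} {S : Finset UnitCircle}

theorem herglotzTransform_eq_sum [IsFiniteMeasure μ] (hS : μ (↑S)ᶜ = 0) (z : ℂ) :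
    herglotzTransform μ z = ∑ w ∈ S, μ.real {w} • (((w : ℂ) + z) / ((w : ℂ) - z)) :=
  integral_eq_sum_of_measure_compl_eq_zero hS _

theorem sum_measureReal_smul_eq_zero [IsFiniteMeasure μ] (hmean : ∫ w : UnitCircle, (w : ℂ) ∂μ = 0)
    (hS : μ (↑S)ᶜ = 0) : ∑ w ∈ S, μ.real {w} • (w : ℂ) = 0 := by
  rw [← integral_eq_sum_of_measure_compl_eq_zero hS, hmean]

theorem exists_sq_mul_blaschkeProduct_of_card_eq_two [IsProbabilityMeasure μ]
    (hmean : ∫ w : UnitCircle, (w : ℂ) ∂μ = 0)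
    (hcard : S.card = 2) (hS : μ (↑S)ᶜ = 0) (hpos : ∀ w ∈ S, μ {w} ≠ 0) :
    ∃ (c : ℂ) (a : Fin 0 → ℂ), ‖c‖ = 1 ∧ (∀ i, ‖a i‖ < 1) ∧
      (∀ z : ℂ, ‖z‖ < 1 → (herglotzTransform μ z - 1) / (herglotzTransform μ z + 1)
        = z ^ 2 * blaschkeProduct c a z) ∧
      ∀ w : UnitCircle, (w : ℂ) ^ 2 * blaschkeProduct c a w = 1 ↔ w ∈ S := by
  have hweight w (hw : w ∈ S) := measureReal_pos_of_measure_ne_zero (hpos w hw)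
  obtain ⟨u, v, huv, rfl⟩ := Finset.card_eq_two.mp hcard
  have hsum := sum_measureReal_singleton_eq_one hS
  have hmean' := sum_measureReal_smul_eq_zero hmean hS
  rw [Finset.sum_pair huv] at hsum hmean'
  obtain ⟨hp, hq, hvu⟩ := eq_neg_of_smul_add_smul_eq_zero (norm_eq_of_mem_sphere u)
    (norm_eq_of_mem_sphere v) (hweight u (by simp)).le (hweight v (by simp)).le hsum hmean'
  refine ⟨conj (u : ℂ) ^ 2, ![], by simp, by simp, fun z hz => ?_, fun w => ?_⟩
  · rw [herglotzTransform_eq_sum hS, Finset.sum_pair huv, hp, hq, hvu]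
    simpa [blaschkeProduct] using cayley_herglotz_two_point (norm_eq_of_mem_sphere u)
      (ne_of_apply_ne norm (by simpa using hz.ne)) (ne_of_apply_ne norm (by simpa using hz.ne)) rfl
  · simp only [blaschkeProduct, Finset.univ_eq_empty, Finset.prod_empty, mul_one]
    rw [sq_mul_conj_sq_eq_one_iff (norm_eq_of_mem_sphere u)]
    simp [Subtype.ext_iff, hvu]

theorem exists_sq_mul_blaschkeProduct_of_card_eq_three [IsProbabilityMeasure μ]
    (hmean : ∫ w : UnitCircle, (w : ℂ) ∂μ = 0)
    (hcard : S.card = 3) (hS : μ (↑S)ᶜ = 0) (hpos : ∀ w ∈ S, μ {w} ≠ 0) :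
    ∃ (c : ℂ) (a : Fin 1 → ℂ), ‖c‖ = 1 ∧ (∀ i, ‖a i‖ < 1) ∧
      (∀ z : ℂ, ‖z‖ < 1 → (herglotzTransform μ z - 1) / (herglotzTransform μ z + 1)
        = z ^ 2 * blaschkeProduct c a z) ∧
      ∀ w : UnitCircle, (w : ℂ) ^ 2 * blaschkeProduct c a w = 1 ↔ w ∈ S := by
  have hweight w (hw : w ∈ S) := measureReal_pos_of_measure_ne_zero (hpos w hw)
  obtain ⟨u, v, t, huv, hut, hvt, rfl⟩ := Finset.card_eq_three.mp hcard
  have sum_three {M : Type} [AddCommMonoid M] (f : UnitCircle → M) :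
      ∑ w ∈ {u, v, t}, f w = f u + f v + f t := by
    rw [Finset.sum_insert (by simp [huv, hut]), Finset.sum_pair hvt, add_assoc]
  have hsum := sum_measureReal_singleton_eq_one hS
  have hmean' := sum_measureReal_smul_eq_zero hmean hS
  rw [sum_three] at hsum hmean'
  have hu := norm_eq_of_mem_sphere u
  have hv := norm_eq_of_mem_sphere v
  have ht := norm_eq_of_mem_sphere t
  have hs : ‖(u + v + t : ℂ)‖ < 1 := norm_add_add_lt_one hu hv ht
    (Subtype.coe_injective.ne huv) (Subtype.coe_injective.ne hut) (Subtype.coe_injective.ne hvt)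
    (hweight u (by simp)) (hweight v (by simp)) (hweight t (by simp)) hsum hmean'
  refine ⟨conj ((u : ℂ) * v * t), ![(u + v + t : ℂ)], by simp, by simpa using hs,
    fun z hz => ?_, fun w => ?_⟩
  · rw [herglotzTransform_eq_sum hS, sum_three]
    simpa [blaschkeProduct] using cayley_herglotz_three_point hu hv ht hsum hmean'
      (ne_of_apply_ne norm (by simpa using hz.ne)) (ne_of_apply_ne norm (by simpa using hz.ne))
      (ne_of_apply_ne norm (by simpa using hz.ne)) (one_sub_conj_mul_ne_zero hs hz.le) rfl
  · simp only [blaschkeProduct, Fin.prod_univ_one, Matrix.cons_val_fin_one]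
    rw [sq_mul_blaschke_three_point_eq_one_iff hu hv ht (one_sub_conj_mul_ne_zero hs (by simp))]
    simp [Subtype.ext_iff]

end FinitelySupported

/-- Let `μ` be a zero-mean Borel probability measure on the unit circle supported on
exactly `n ∈ {2,3}` points, `h_μ(z) = ∫ (w+z)/(w-z) dμ(w)` its Herglotz transform and
`ψ_μ = (h_μ - 1)/(h_μ + 1)`. Then `ψ_μ` is a Blaschke product of degree `n` (a rational
inner function) with `ψ_μ(0) = 0` and `ψ_μ'(0) = 0`, and for `w` on the circle,
`ψ_μ(w) = 1` exactly when `w` lies in the support of `μ`. -/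
theorem test_function_of_extreme_measure_is_blaschke
    (μ : Measure UnitCircle) [IsProbabilityMeasure μ]
    (hmean : (∫ w : UnitCircle, (w : ℂ) ∂μ) = 0)
    (n : ℕ) (hn : n = 2 ∨ n = 3)
    (S : Finset UnitCircle) (hcard : S.card = n) (hsupp : μ (↑S)ᶜ = 0)
    (hpos : ∀ w ∈ S, μ {w} ≠ 0)
    (h ψ : ℂ → ℂ)
    (hh : ∀ z : ℂ, ‖z‖ < 1 →
      h z = ∫ w : UnitCircle, ((w : ℂ) + z) / ((w : ℂ) - z) ∂μ)
    (hψ : ∀ z : ℂ, ‖z‖ < 1 → ψ z = (h z - 1) / (h z + 1)) :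
    ∃ (c : ℂ) (a : Fin n → ℂ), ‖c‖ = 1 ∧ (∀ i, ‖a i‖ < 1) ∧
      (∀ z : ℂ, ‖z‖ < 1 →
        ψ z = c * ∏ i, ((z - a i) / (1 - conj (a i) * z))) ∧
      ψ 0 = 0 ∧ deriv ψ 0 = 0 ∧
      (∀ w : UnitCircle,
        c * (∏ i, (((w : ℂ) - a i) / (1 - conj (a i) * (w : ℂ)))) = 1 ↔ w ∈ S) := by
  have hψB {m : ℕ} {c : ℂ} {a : Fin m → ℂ} (hB : ∀ z : ℂ, ‖z‖ < 1 →
      (herglotzTransform μ z - 1) / (herglotzTransform μ z + 1) = z ^ 2 * blaschkeProduct c a z)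
      (z : ℂ) (hz : ‖z‖ < 1) : ψ z = z ^ 2 * blaschkeProduct c a z := by
    rw [hψ z hz, hh z hz]
    exact hB z hz
  rcases hn with rfl | rfl
  · obtain ⟨c, a, hc, ha, hB, hS⟩ :=
      exists_sq_mul_blaschkeProduct_of_card_eq_two hmean hcard hsupp hpos
    exact exists_blaschkeProduct_of_eq_sq_mul hc ha (hψB hB) hS
  · obtain ⟨c, a, hc, ha, hB, hS⟩ :=
      exists_sq_mul_blaschkeProduct_of_card_eq_three hmean hcard hsupp hpos
    exact exists_blaschkeProduct_of_eq_sq_mul hc ha (hψB hB) hS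
end
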